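/- arXiv:quant-ph/0702251 — 5 statements merged into one kernel-verified Lean document; each statement's English description precedes it below -/
import Mathlib

section
/- Let 0 < μ_1 < μ_2 < ... < μ_k. Define the k×k lower-triangular matrices A_k with entries A_{k:i}^{l} = ∏_{t=1}^{l-1}(μ_i - μ_t) for l ≤ i and 0 otherwise, and B_k with entries B_{k:l}^{i} = 1/∏_{t=1, t≠i}^{l}(μ_i - μ_t) for i ≤ l and 0 otherwise. Then B_k A_k = I, i.e., B_k is the inverse of A_k. -/
/-- The lower-triangular matrix `A_k`: `A_{k:i}^l = ∏_{t=1}^{l-1}(μ_i - μ_t)`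
for `l ≤ i` and `0` otherwise (indices `0`-based here: row `i`, column `l`). -/
noncomputable def Amat (k : ℕ) (μ : Fin k → ℝ) : Matrix (Fin k) (Fin k) ℝ :=
  fun i l =>
    if (l : ℕ) ≤ (i : ℕ) then
      ∏ t ∈ Finset.univ.filter (fun t : Fin k => (t : ℕ) < (l : ℕ)), (μ i - μ t)
    else 0

/-- The lower-triangular matrix `B_k`: `B_{k:l}^i = 1/∏_{t=1,t≠i}^{l}(μ_i - μ_t)`
for `i ≤ l` and `0` otherwise (row `l`, column `i`). -/
noncomputable def Bmat (k : ℕ) (μ : Fin k → ℝ) : Matrix (Fin k) (Fin k) ℝ :=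
  fun l i =>
    if (i : ℕ) ≤ (l : ℕ) then
      1 / ∏ t ∈ (Finset.univ.filter (fun t : Fin k => (t : ℕ) ≤ (l : ℕ))).erase i, (μ i - μ t)
    else 0

/-! The entry `A_{i,j}` is `P_j(μ_i)` for the monic polynomial `P_j = ∏_{t<j} (X - μ_t)`, so
`(B A)_{l,j}` is the divided difference of `P_j` at the nodes `μ_0, …, μ_l`. For `j ≤ l` the degree
of `P_j` is below the number of nodes, so the divided difference is the coefficient of `X^l` in
`P_j`, i.e. `δ_{jl}`; for `j > l` every node is a root of `P_j`. -/

open Polynomial Finset Lagrange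

namespace Lagrange

variable {F ι : Type*} [Field F] [DecidableEq ι] {s t : Finset ι} {v : ι → F}

theorem sum_eval_nodal_div_eq_zero_of_subset (hst : s ⊆ t) :
    ∑ i ∈ s, (nodal t v).eval (v i) / ∏ j ∈ s.erase i, (v i - v j) = 0 :=
  sum_eq_zero fun i hi => by rw [eval_nodal_at_node (hst hi), zero_div]

theorem sum_eval_nodal_div_of_card_lt (hvs : Set.InjOn v s) (hts : #t < #s) :
    ∑ i ∈ s, (nodal t v).eval (v i) / ∏ j ∈ s.erase i, (v i - v j) =
      if #t + 1 = #s then 1 else 0 := by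
  rw [← coeff_eq_sum hvs (by rw [degree_nodal]; exact_mod_cast hts)]
  split_ifs with h
  · rw [← h, Nat.add_sub_cancel, ← natDegree_nodal (v := v), coeff_natDegree,
      nodal_monic.leadingCoeff]
  · exact coeff_eq_zero_of_natDegree_lt (by rw [natDegree_nodal]; omega)

end Lagrange

theorem Amat_apply (k : ℕ) (μ : Fin k → ℝ) (i l : Fin k) :
    Amat k μ i l = (nodal (Iio l) μ).eval (μ i) := by
  by_cases hli : l ≤ i
  · simp only [Amat, Fin.val_fin_le, Fin.val_fin_lt, if_pos hli, filter_gt_eq_Iio, eval_nodal]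
  · simp only [Amat, Fin.val_fin_le, if_neg hli]
    rw [eval_nodal_at_node (mem_Iio.mpr (not_le.mp hli))]

theorem Bmat_apply (k : ℕ) (μ : Fin k → ℝ) (l i : Fin k) :
    Bmat k μ l i = if i ∈ Iic l then (∏ t ∈ (Iic l).erase i, (μ i - μ t))⁻¹ else 0 := by
  simp only [Bmat, Fin.val_fin_le, filter_ge_eq_Iic, mem_Iic, one_div]

theorem Bmat_mul_Amat_apply (k : ℕ) (μ : Fin k → ℝ) (l j : Fin k) :
    (Bmat k μ * Amat k μ) l j =
      ∑ i ∈ Iic l, (nodal (Iio j) μ).eval (μ i) / ∏ t ∈ (Iic l).erase i, (μ i - μ t) := by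
  simp only [Matrix.mul_apply, Bmat_apply, Amat_apply, ite_mul, zero_mul, sum_ite_mem,
    univ_inter, div_eq_inv_mul]

theorem Bmat_mul_Amat_general (k : ℕ) (μ : Fin k → ℝ) (hμ : StrictMono μ) :
    Bmat k μ * Amat k μ = 1 := by
  ext l j
  rw [Bmat_mul_Amat_apply, Matrix.one_apply]
  rcases le_or_gt j l with hjl | hlj
  · have hcard : #(Iio j) < #(Iic l) := by
      simp only [Fin.card_Iio, Fin.card_Iic]
      omega
    rw [sum_eval_nodal_div_of_card_lt hμ.injective.injOn hcard]
    simp only [Fin.card_Iio, Fin.card_Iic, Nat.add_right_cancel_iff, Fin.val_inj, eq_comm]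
  · have hsub : Iic l ⊆ Iio j := fun i hi => mem_Iio.mpr ((mem_Iic.mp hi).trans_lt hlj)
    rw [sum_eval_nodal_div_eq_zero_of_subset hsub, if_neg hlj.ne]

/-- For `0 < μ_1 < … < μ_k`, the matrices `B_k` and `A_k` are mutually inverse:
`B_k A_k = I`. -/
theorem Bmat_mul_Amat (k : ℕ) (μ : Fin k → ℝ) (hμ : StrictMono μ)
    (hpos : ∀ i, 0 < μ i) :
    Bmat k μ * Amat k μ = 1 :=
  Bmat_mul_Amat_general k μ hμ
end

section
/- For any 1 ≤ l' < l ≤ k and distinct reals μ_1,...,μ_k: Σ_{i=l'}^{l} ∏_{t=1}^{l'-1}(μ_i - μ_t) / ∏_{t=1, t≠i}^{l}(μ_i - μ_t) = 0, while for l' = l the sum equals 1. -/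
/-!
The summand is `P(μ_i) / ∏_{t ≠ i} (μ_i - μ_t)` for the monic polynomial
`P = ∏_{t=1}^{l'-1} (X - μ_t)` of degree `l' - 1`, which vanishes at `μ_1, …, μ_{l'-1}`. So the sum
may be extended to all `i ≤ l`, where Lagrange interpolation at `μ_1, …, μ_l` identifies it with
the coefficient of `X^(l-1)` in `P`.
-/

open Polynomial Finset

namespace Lagrange

theorem coeff_nodal_of_card_le {R ι : Type*} [CommRing R] [Nontrivial R] {t : Finset ι}
    {v : ι → R} {n : ℕ} (htn : #t ≤ n) :
    (nodal t v).coeff n = if #t = n then 1 else 0 := by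
  split_ifs with h
  · subst h
    rw [← natDegree_nodal (v := v), nodal_monic.coeff_natDegree]
  · exact coeff_eq_zero_of_natDegree_lt (natDegree_nodal.trans_lt (lt_of_le_of_ne htn h))

theorem sum_sdiff_eval_nodal_div_prod_erase_sub {F ι : Type*} [Field F] [DecidableEq ι]
    {s t : Finset ι} {v : ι → F} (hvs : Set.InjOn v s) (hlt : #t < #s) :
    ∑ i ∈ s \ t, (nodal t v).eval (v i) / ∏ j ∈ s.erase i, (v i - v j) =
      if #t + 1 = #s then 1 else 0 := by
  calc ∑ i ∈ s \ t, (nodal t v).eval (v i) / ∏ j ∈ s.erase i, (v i - v j)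
      = ∑ i ∈ s, (nodal t v).eval (v i) / ∏ j ∈ s.erase i, (v i - v j) := by
        refine sum_subset sdiff_subset fun i hi hni => ?_
        rw [eval_nodal_at_node (by simpa [hi] using hni), zero_div]
    _ = (nodal t v).coeff (#s - 1) :=
        (coeff_eq_sum hvs (by rw [degree_nodal]; exact_mod_cast hlt)).symm
    _ = if #t + 1 = #s then 1 else 0 := by
        rw [coeff_nodal_of_card_le (by omega)]
        exact if_congr (by omega) rfl rfl

end Lagrange

/-- Entrywise inverse relation for the Wang-expansion matrices: for pairwise
distinct reals `μ_1,…,μ_k` and `1 ≤ l' ≤ l ≤ k`,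
`Σ_{i=l'}^{l} ∏_{t=1}^{l'-1}(μ_i - μ_t) / ∏_{t=1,t≠i}^{l}(μ_i - μ_t)`
equals `1` when `l' = l` and `0` when `l' < l`. -/
theorem wang_matrix_entry_inverse (k : ℕ) (μ : ℕ → ℝ)
    (hμ : Set.InjOn μ (Set.Icc 1 k)) (l' l : ℕ) (hl' : 1 ≤ l') (hl'l : l' ≤ l)
    (hl : l ≤ k) :
    ∑ i ∈ Finset.Icc l' l,
        (∏ t ∈ Finset.Icc 1 (l' - 1), (μ i - μ t)) /
          ∏ t ∈ (Finset.Icc 1 l).erase i, (μ i - μ t) =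
      if l' = l then 1 else 0 := by
  have hInj : Set.InjOn μ ↑(Icc 1 l) := by
    rw [coe_Icc]
    exact hμ.mono (Set.Icc_subset_Icc le_rfl hl)
  have hsdiff : Icc 1 l \ Icc 1 (l' - 1) = Icc l' l := by
    ext i
    simp only [mem_sdiff, mem_Icc]
    omega
  have key := Lagrange.sum_sdiff_eval_nodal_div_prod_erase_sub (t := Icc 1 (l' - 1)) hInj
    (by simp only [Nat.card_Icc]; omega)
  simp only [hsdiff, Lagrange.eval_nodal, Nat.card_Icc] at key
  rw [key]
  exact if_congr (by omega) rfl rfl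
end

section
/- For 2 ≤ i and pairwise distinct positive reals μ_1 < ... < μ_{i-1}, and for every integer n ≥ i, the coefficient γ_{i,n} := Σ_{j=1}^{i-1} μ_j^{n-2}/∏_{t=1, t≠j}^{i-1}(μ_j - μ_t) is nonnegative; in fact (i-2)! γ_{i,n} = ∫_{Δ_{i-2}} ((n-2)!/(n-i)!) (Σ_{t=1}^{i-1} a_t μ_t)^{n-i} dp_{i-2}(a) ≥ 0. -/
open MeasureTheory

/-- Coordinate chart of the standard `m`-simplex: the first `m` barycentric
coordinates (the last one is `1 - Σ`).  The uniform probability measure on the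
`m`-simplex corresponds to `m! ·` Lebesgue measure on this set. -/
def stdT (m : ℕ) : Set (Fin m → ℝ) := {t | (∀ j, 0 ≤ t j) ∧ ∑ j, t j ≤ 1}

/-!
The sum `γ_{i,n}` is the divided difference of `y ↦ y ^ (n - 2)` at the nodes `μ_1, …, μ_{i-1}`.
The Hermite–Genocchi formula writes a divided difference of order `k` as the integral of the
`k`-th derivative over the standard `k`-simplex, evaluated at the barycentric combination of the
nodes. It follows by induction on `k`: on the left the divided differences satisfy their usual
recurrence, and on the right integrating out the last barycentric coordinate by the fundamental
theorem of calculus produces the same recurrence. For `y ^ p` the integrand is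
`p! / (p - k)! · (∑ a_t μ_t) ^ (p - k)`, which is nonnegative when the nodes are.
-/

section DividedDifference

variable {ι κ : Type*} [DecidableEq ι] [DecidableEq κ]

noncomputable def divDiff (f : ℝ → ℝ) (x : ι → ℝ) (s : Finset ι) : ℝ :=
  ∑ j ∈ s, f (x j) / ∏ t ∈ s.erase j, (x j - x t)

theorem divDiff_singleton (f : ℝ → ℝ) (x : ι → ℝ) (j : ι) : divDiff f x {j} = f (x j) := by
  simp [divDiff]

theorem divDiff_map (f : ℝ → ℝ) (x : κ → ℝ) (e : ι ↪ κ) (s : Finset ι) :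
    divDiff f x (s.map e) = divDiff f (x ∘ e) s := by
  simp only [divDiff, Finset.sum_map, ← Finset.map_erase, Finset.prod_map, Function.comp_apply]

theorem divDiff_insert (f : ℝ → ℝ) (x : ι → ℝ) {s : Finset ι} {c : ι} (hc : c ∉ s) :
    divDiff f x (insert c s) =
      f (x c) / ∏ t ∈ s, (x c - x t) + divDiff (fun y ↦ f y / (y - x c)) x s := by
  rw [divDiff, Finset.sum_insert hc, Finset.erase_insert hc]
  congr 1
  refine Finset.sum_congr rfl fun j hj ↦ ?_
  have hcj : c ∉ s.erase j := fun h ↦ hc (Finset.mem_of_mem_erase h)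
  rw [Finset.erase_insert_of_ne (ne_of_mem_of_not_mem hj hc).symm, Finset.prod_insert hcj,
    div_div, mul_comm]

theorem divDiff_insert_insert_mul_sub (f : ℝ → ℝ) (x : ι → ℝ) {s : Finset ι} {a b : ι}
    (hab : x a ≠ x b) (ha : ∀ j ∈ s, x j ≠ x a) (hb : ∀ j ∈ s, x j ≠ x b) :
    divDiff f x (insert a (insert b s)) * (x a - x b) =
      divDiff f x (insert a s) - divDiff f x (insert b s) := by
  have has : a ∉ s := fun h ↦ ha a h rfl
  have hbs : b ∉ s := fun h ↦ hb b h rfl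
  have habs : a ∉ insert b s := by
    simpa [has] using fun h : a = b ↦ hab (congrArg x h)
  rw [divDiff_insert f x habs, divDiff_insert _ x hbs, divDiff_insert f x has,
    divDiff_insert f x hbs, Finset.prod_insert hbs]
  have hab' : x a - x b ≠ 0 := sub_ne_zero.2 hab
  have key : divDiff (fun y ↦ f y / (y - x a) / (y - x b)) x s * (x a - x b) =
      divDiff (fun y ↦ f y / (y - x a)) x s - divDiff (fun y ↦ f y / (y - x b)) x s := by
    simp only [divDiff, Finset.sum_mul, ← Finset.sum_sub_distrib]
    refine Finset.sum_congr rfl fun j hj ↦ ?_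
    have hja : x j - x a ≠ 0 := sub_ne_zero.2 (ha j hj)
    have hjb : x j - x b ≠ 0 := sub_ne_zero.2 (hb j hj)
    field_simp
    ring
  -- keep `field_simp` out of the numerators of the remaining divided differences
  generalize divDiff (fun y ↦ f y / (y - x a) / (y - x b)) x s = D at key ⊢
  generalize divDiff (fun y ↦ f y / (y - x a)) x s = D₁ at key ⊢
  generalize divDiff (fun y ↦ f y / (y - x b)) x s = D₂ at key ⊢
  rw [add_sub_add_comm, ← key]
  field_simp
  ring

end DividedDifference

-- On `range (k + 1)`, `x ∘ swap k (k + 1)` is `x` with the node `x k` replaced by `x (k + 1)`.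
theorem divDiff_range_succ_succ (f : ℝ → ℝ) (k : ℕ) (x : ℕ → ℝ)
    (hx : Set.InjOn x (Set.Iic (k + 1))) :
    divDiff f x (Finset.range (k + 2)) =
      (divDiff f x (Finset.range (k + 1)) -
        divDiff f (x ∘ Equiv.swap k (k + 1)) (Finset.range (k + 1))) / (x k - x (k + 1)) := by
  have hne {t u : ℕ} (ht : t ≤ k + 1) (hu : u ≤ k + 1) (htu : t ≠ u) : x t ≠ x u :=
    fun h ↦ htu (hx ht hu h)
  have hrange : Finset.range (k + 2) = insert k (insert (k + 1) (Finset.range k)) := by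
    ext t
    simp only [Finset.mem_range, Finset.mem_insert]
    omega
  have hswap : insert (k + 1) (Finset.range k) =
      (Finset.range (k + 1)).map (Equiv.swap k (k + 1)).toEmbedding := by
    ext t
    simp only [Finset.mem_insert, Finset.mem_range, Finset.mem_map_equiv, Equiv.symm_swap,
      Equiv.swap_apply_def]
    split_ifs <;> omega
  have hd : x k - x (k + 1) ≠ 0 := sub_ne_zero.2 (hne (by omega) le_rfl (by omega))
  rw [eq_div_iff hd, hrange, divDiff_insert_insert_mul_sub, hswap, divDiff_map,
    ← Finset.range_add_one]
  · rfl
  · exact hne (by omega) le_rfl (by omega)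
  all_goals
    intro j hj
    have hjk := Finset.mem_range.1 hj
    exact hne (by omega) (by omega) (by omega)

theorem isClosed_stdT (m : ℕ) : IsClosed (stdT m) := by
  simp only [stdT, Set.ofPred_and, Set.ofPred_forall]
  exact (isClosed_iInter fun j ↦ isClosed_le continuous_const (continuous_apply j)).inter
    (isClosed_le (by fun_prop) continuous_const)

theorem measurableSet_stdT (m : ℕ) : MeasurableSet (stdT m) :=
  (isClosed_stdT m).measurableSet

theorem isCompact_stdT (m : ℕ) : IsCompact (stdT m) :=
  isCompact_Icc.of_isClosed_subset (isClosed_stdT m) fun _ ht ↦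
    ⟨ht.1, fun j ↦ (Finset.single_le_sum (fun i _ ↦ ht.1 i) (Finset.mem_univ j)).trans ht.2⟩

theorem snoc_mem_stdT_iff {k : ℕ} (a : Fin k → ℝ) (y : ℝ) :
    (Fin.snoc a y : Fin (k + 1) → ℝ) ∈ stdT (k + 1) ↔
      a ∈ stdT k ∧ y ∈ Set.Icc 0 (1 - ∑ j, a j) := by
  simp only [stdT, Set.mem_ofPred_eq, Fin.forall_fin_succ', Fin.snoc_castSucc, Fin.snoc_last,
    Fin.sum_univ_castSucc, Set.mem_Icc]
  constructor
  · rintro ⟨⟨ha, hy⟩, hs⟩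
    exact ⟨⟨ha, by linarith⟩, hy, by linarith⟩
  · rintro ⟨⟨ha, -⟩, hy, hs⟩
    exact ⟨⟨ha, hy⟩, by linarith⟩

theorem setIntegral_stdT_succ {k : ℕ} {F : (Fin (k + 1) → ℝ) → ℝ}
    (hF : IntegrableOn F (stdT (k + 1))) :
    ∫ a in stdT (k + 1), F a =
      ∫ a in stdT k, ∫ y in Set.Icc 0 (1 - ∑ j, a j), F (Fin.snoc a y) := by
  set e := (MeasurableEquiv.piFinSuccAbove (fun _ : Fin (k + 1) ↦ ℝ) (Fin.last k)).symm
  have he : MeasurePreserving e (volume.prod volume) volume :=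
    (volume_preserving_piFinSuccAbove (fun _ : Fin (k + 1) ↦ ℝ) (Fin.last k)).symm _
  have he_apply (z : ℝ × (Fin k → ℝ)) : e z = Fin.snoc z.2 z.1 := by
    simp [e, Fin.insertNthEquiv, Fin.insertNth_last']
  set S := e ⁻¹' stdT (k + 1)
  have hS : MeasurableSet S := e.measurable (measurableSet_stdT _)
  have hFS : IntegrableOn (fun z ↦ F (e z)) S (volume.prod volume) :=
    (he.integrableOn_comp_preimage e.measurableEmbedding).2 hF
  rw [← he.setIntegral_preimage_emb e.measurableEmbedding, ← integral_indicator hS,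
    integral_prod_symm _ (hFS.integrable_indicator hS),
    ← integral_indicator (measurableSet_stdT k)]
  congr 1
  ext a
  by_cases ha : a ∈ stdT k
  · rw [Set.indicator_of_mem ha, ← integral_indicator measurableSet_Icc]
    congr 1
    ext y
    simp [S, Set.indicator, he_apply, snoc_mem_stdT_iff, ha]
  · rw [Set.indicator_of_notMem ha]
    simp [S, Set.indicator, he_apply, snoc_mem_stdT_iff, ha]

theorem measureReal_stdT_zero : volume.real (stdT 0) = 1 := by
  rw [show stdT 0 = Set.univ by ext; simp [stdT], volume_pi, Measure.pi_of_empty]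
  simp

theorem setIntegral_Icc_deriv_comp_add_mul {g : ℝ → ℝ} (hg : Differentiable ℝ g)
    (hg' : Continuous (deriv g)) (c : ℝ) {d : ℝ} (hd : d ≠ 0) {s : ℝ} (hs : 0 ≤ s) :
    ∫ y in Set.Icc 0 s, deriv g (c + d * y) = (g (c + d * s) - g c) / d := by
  rw [integral_Icc_eq_integral_Ioc, ← intervalIntegral.integral_of_le hs,
    intervalIntegral.integral_comp_add_mul _ hd, intervalIntegral.integral_deriv_eq_sub
      (fun y _ ↦ hg y) (hg'.intervalIntegrable _ _)]
  simp [div_eq_inv_mul]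

def baryPoint {k : ℕ} (x : ℕ → ℝ) (a : Fin k → ℝ) : ℝ :=
  ∑ m, a m * x m + (1 - ∑ m, a m) * x k

theorem baryPoint_comp_swap {k : ℕ} (x : ℕ → ℝ) (a : Fin k → ℝ) :
    baryPoint (x ∘ Equiv.swap k (k + 1)) a = ∑ m, a m * x m + (1 - ∑ m, a m) * x (k + 1) := by
  have hswap (m : Fin k) : Equiv.swap k (k + 1) (m : ℕ) = m :=
    Equiv.swap_apply_of_ne_of_ne m.isLt.ne (by omega)
  simp [baryPoint, hswap]

theorem baryPoint_snoc {k : ℕ} (x : ℕ → ℝ) (a : Fin k → ℝ) (y : ℝ) :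
    baryPoint x (Fin.snoc a y : Fin (k + 1) → ℝ) =
      baryPoint (x ∘ Equiv.swap k (k + 1)) a + (x k - x (k + 1)) * y := by
  rw [baryPoint_comp_swap]
  simp only [baryPoint, Fin.sum_univ_castSucc, Fin.snoc_castSucc, Fin.snoc_last,
    Fin.val_castSucc, Fin.val_last]
  ring

theorem baryPoint_comp_swap_add {k : ℕ} (x : ℕ → ℝ) (a : Fin k → ℝ) :
    baryPoint (x ∘ Equiv.swap k (k + 1)) a + (x k - x (k + 1)) * (1 - ∑ m, a m) =
      baryPoint x a := by
  rw [baryPoint_comp_swap, baryPoint]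
  ring

theorem integrableOn_stdT_comp_baryPoint {k : ℕ} {h : ℝ → ℝ} (hh : Continuous h) (x : ℕ → ℝ) :
    IntegrableOn (fun a : Fin k → ℝ ↦ h (baryPoint x a)) (stdT k) :=
  (hh.comp (by unfold baryPoint; fun_prop)).continuousOn.integrableOn_compact (isCompact_stdT k)

theorem baryPoint_nonneg {k : ℕ} {x : ℕ → ℝ} (hx : ∀ j ≤ k, 0 ≤ x j) {a : Fin k → ℝ}
    (ha : a ∈ stdT k) : 0 ≤ baryPoint x a :=
  add_nonneg (Finset.sum_nonneg fun m _ ↦ mul_nonneg (ha.1 m) (hx m m.isLt.le))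
    (mul_nonneg (by linarith [ha.2]) (hx k le_rfl))

/-- The Hermite–Genocchi formula. -/
theorem divDiff_eq_setIntegral_iteratedDeriv {f : ℝ → ℝ} {k : ℕ} (hf : ContDiff ℝ k f)
    {x : ℕ → ℝ} (hx : Set.InjOn x (Set.Iic k)) :
    divDiff f x (Finset.range (k + 1)) = ∫ a in stdT k, iteratedDeriv k f (baryPoint x a) := by
  induction k generalizing x with
  | zero => simp [baryPoint, divDiff_singleton, measureReal_stdT_zero]
  | succ k ih =>
    have hf' : ContDiff ℝ k f := hf.of_le (by exact_mod_cast k.le_succ)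
    have hxk : Set.InjOn x (Set.Iic k) := hx.mono (Set.Iic_subset_Iic.2 k.le_succ)
    have hxs : Set.InjOn (x ∘ Equiv.swap k (k + 1)) (Set.Iic k) :=
      hx.comp (Equiv.injective _).injOn fun t ht ↦ by
        simp only [Set.mem_Iic, Equiv.swap_apply_def] at ht ⊢; split_ifs <;> omega
    have hd : x k - x (k + 1) ≠ 0 := sub_ne_zero.2 fun h ↦ by
      simpa using hx (by simp) (by simp) h
    have hg : Differentiable ℝ (iteratedDeriv k f) :=
      hf.differentiable_iteratedDeriv k (by exact_mod_cast k.lt_succ_self)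
    have hg' : Continuous (iteratedDeriv (k + 1) f) := hf.continuous_iteratedDeriv _ le_rfl
    rw [divDiff_range_succ_succ f k x hx, ih hf' hxk, ih hf' hxs,
      ← integral_sub (integrableOn_stdT_comp_baryPoint hg.continuous x)
        (integrableOn_stdT_comp_baryPoint hg.continuous _),
      ← integral_div, setIntegral_stdT_succ (integrableOn_stdT_comp_baryPoint hg' x)]
    refine setIntegral_congr_fun (measurableSet_stdT k) fun a ha ↦ ?_
    rw [iteratedDeriv_succ] at hg' ⊢
    simp only [baryPoint_snoc]
    rw [setIntegral_Icc_deriv_comp_add_mul hg hg' _ hd (by linarith [ha.2]), baryPoint_comp_swap_add]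

theorem iteratedDeriv_pow_eq_factorial_div {p k : ℕ} (hk : k ≤ p) (y : ℝ) :
    iteratedDeriv k (· ^ p) y = (p.factorial : ℝ) / (p - k).factorial * y ^ (p - k) := by
  rw [iteratedDeriv_pow]
  congr 1
  rw [eq_div_iff (by positivity)]
  exact_mod_cast (mul_comm _ _).trans (Nat.factorial_mul_descFactorial hk)

/-- For `i ≥ 2`, `0 < μ_1 < … < μ_{i-1}` and `n ≥ i`, the Wang-expansion
coefficient `γ_{i,n} = Σ_{j=1}^{i-1} μ_j^{n-2}/∏_{t≠j}(μ_j - μ_t)` satisfies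
`(i-2)! γ_{i,n} = ∫_{Δ_{i-2}} ((n-2)!/(n-i)!) (Σ_t a_t μ_t)^{n-i} dp_{i-2}`
(stated in the coordinate chart, where `dp_{i-2} = (i-2)! dλ`), and in
particular `γ_{i,n} ≥ 0`. -/
theorem gamma_nonneg_integral (i n : ℕ) (hi : 2 ≤ i) (hn : i ≤ n) (μ : ℕ → ℝ)
    (hpos : ∀ j, 1 ≤ j → j ≤ i - 1 → 0 < μ j)
    (hmono : ∀ j j', 1 ≤ j → j < j' → j' ≤ i - 1 → μ j < μ j') :
    (∑ j ∈ Finset.Icc 1 (i - 1),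
        μ j ^ (n - 2) / ∏ t ∈ (Finset.Icc 1 (i - 1)).erase j, (μ j - μ t)) =
      (∫ a in stdT (i - 2),
        ((n - 2).factorial : ℝ) / ((n - i).factorial : ℝ) *
          ((∑ m : Fin (i - 2), a m * μ (m + 1)) + (1 - ∑ m : Fin (i - 2), a m) * μ (i - 1))
            ^ (n - i)) ∧
      0 ≤ ∑ j ∈ Finset.Icc 1 (i - 1),
        μ j ^ (n - 2) / ∏ t ∈ (Finset.Icc 1 (i - 1)).erase j, (μ j - μ t) := by
  obtain ⟨k, rfl⟩ : ∃ k, i = k + 2 := ⟨i - 2, by omega⟩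
  obtain ⟨p, rfl⟩ : ∃ p, n = p + 2 := ⟨n - 2, by omega⟩
  simp only [Nat.add_sub_cancel, Nat.add_sub_add_right, show k + 2 - 1 = k + 1 from rfl]
    at hpos hmono ⊢
  set x : ℕ → ℝ := fun j ↦ μ (j + 1)
  have hx : StrictMonoOn x (Set.Iic k) := fun t _ u hu htu ↦
    hmono _ _ (by omega) (by omega) (by simp only [Set.mem_Iic] at hu; omega)
  have hγ : ∑ j ∈ Finset.Icc 1 (k + 1),
        μ j ^ p / ∏ t ∈ (Finset.Icc 1 (k + 1)).erase j, (μ j - μ t) =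
      ∫ a in stdT k, (p.factorial : ℝ) / (p - k).factorial * baryPoint x a ^ (p - k) := by
    have hIcc : Finset.Icc 1 (k + 1) = (Finset.range (k + 1)).map (addRightEmbedding 1) := by
      rw [Nat.range_succ_eq_Icc_zero, Finset.map_add_right_Icc]
    calc _ = divDiff (· ^ p) μ ((Finset.range (k + 1)).map (addRightEmbedding 1)) := by
          rw [← hIcc]; rfl
      _ = divDiff (· ^ p) x (Finset.range (k + 1)) := divDiff_map _ _ _ _
      _ = ∫ a in stdT k, iteratedDeriv k (· ^ p) (baryPoint x a) :=
          divDiff_eq_setIntegral_iteratedDeriv (contDiff_id.pow p) hx.injOn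
      _ = _ := by simp_rw [iteratedDeriv_pow_eq_factorial_div (show k ≤ p by omega)]
  refine ⟨hγ, hγ ▸ setIntegral_nonneg (measurableSet_stdT k) fun a ha ↦ ?_⟩
  have hx₀ (j : ℕ) (hj : j ≤ k) : 0 ≤ x j := (hpos _ (by omega) (by omega)).le
  exact mul_nonneg (by positivity) (pow_nonneg (baryPoint_nonneg hx₀ ha) _)
end

section
/- Let 0 < μ_1 < ... < μ_k and define γ_{l,n} := Σ_{j=1}^{l-1} μ_j^{n-2}/∏_{t=1, t≠j}^{l-1}(μ_j - μ_t) and Ω_l := Σ_{n=l}^{∞} γ_{l,n}/n!. Then for each s with 1 ≤ s ≤ k: Σ_{n=2}^{∞} μ_s^{n-2}/n! = Σ_{l=1}^{s} ∏_{t=1}^{l-1}(μ_s - μ_t) · Ω_{l+1}. (Equivalently, the phase-randomized coherent state of intensity μ_s decomposes as a positive combination of the vacuum, the single-photon state, and the basis states ρ_2,...,ρ_{s+1}.) -/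
/-- `γ_{l,n} = Σ_{j=1}^{l-1} μ_j^{n-2}/∏_{t=1,t≠j}^{l-1}(μ_j - μ_t)`. -/
noncomputable def gammaCoef (μ : ℕ → ℝ) (l n : ℕ) : ℝ :=
  ∑ j ∈ Finset.Icc 1 (l - 1),
    μ j ^ (n - 2) / ∏ t ∈ (Finset.Icc 1 (l - 1)).erase j, (μ j - μ t)

/-- `Ω_l = Σ_{n=l}^∞ γ_{l,n}/n!`. -/
noncomputable def OmegaCoef (μ : ℕ → ℝ) (l : ℕ) : ℝ :=
  ∑' n : ℕ, if l ≤ n then gammaCoef μ l n / (n.factorial : ℝ) else 0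

/-! For fixed `n ≥ 2` the identity is Newton's interpolation formula for the values
`μ_j ^ (n - 2) / n!` at the nodes `μ_1, …, μ_s`, evaluated at the last node `μ_s`:
`γ_{l+1,n}` is the divided difference of `x ↦ x ^ (n - 2)` on `μ_1, …, μ_l`. That divided
difference is the coefficient of `X ^ (l - 1)` in a polynomial of degree `n - 2`, so it vanishes
for `n ≤ l`; this is why the cut-off `n ≥ l + 1` in `Ω_{l+1}` costs nothing. Newton's formula
comes from Lagrange interpolation: adding a node adds the divided difference times the nodal
polynomial of the old nodes, since the difference vanishes at the old nodes and its top
coefficient is that divided difference. All series are exponential tails, so summing over `n`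
commutes with the finite sums. -/

open Polynomial Finset

namespace Lagrange

variable {F ι : Type*} [Field F] [DecidableEq ι] {s : Finset ι} {v : ι → F}

def dividedDiff (s : Finset ι) (v r : ι → F) : F :=
  ∑ i ∈ s, r i / ∏ j ∈ s.erase i, (v i - v j)

theorem coeff_interpolate_eq_dividedDiff (hvs : Set.InjOn v s) (r : ι → F) :
    (interpolate s v r).coeff (#s - 1) = dividedDiff s v r := by
  rw [coeff_eq_sum hvs (degree_interpolate_lt r hvs)]
  exact sum_congr rfl fun i hi => by rw [eval_interpolate_at_node r hvs hi]

theorem dividedDiff_div_const (r : ι → F) (c : F) :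
    dividedDiff s v (fun i => r i / c) = dividedDiff s v r / c := by
  simp only [dividedDiff, sum_div, div_right_comm _ c]

theorem dividedDiff_pow_eq_zero (hvs : Set.InjOn v s) {m : ℕ} (hm : m + 1 < #s) :
    dividedDiff s v (fun i => v i ^ m) = 0 := by
  have hdeg : (X ^ m : F[X]).degree < #s := by
    rw [degree_X_pow]; exact_mod_cast m.lt_succ_self.trans hm
  have hcoeff := coeff_eq_sum hvs hdeg
  simp only [coeff_X_pow, eval_pow, eval_X] at hcoeff
  rw [dividedDiff, ← hcoeff, if_neg (by omega)]

theorem interpolate_insert {i : ι} (hi : i ∉ s) (hvs : Set.InjOn v (insert i s : Finset ι))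
    (r : ι → F) :
    interpolate (insert i s) v r =
      interpolate s v r + C (dividedDiff (insert i s) v r) * nodal s v := by
  have hvs' : Set.InjOn v s := hvs.mono (by simp)
  rw [← sub_eq_zero]
  refine eq_zero_of_degree_lt_of_eval_index_eq_zero _ hvs' ?_ fun j hj => ?_
  · refine (degree_lt_iff_coeff_zero _ _).mpr fun m hm => ?_
    have hs : (interpolate s v r).coeff m = 0 :=
      coeff_eq_zero_of_degree_lt ((degree_interpolate_lt r hvs').trans_le (by exact_mod_cast hm))
    rw [coeff_sub, coeff_add, coeff_C_mul, hs]
    rcases hm.eq_or_lt with rfl | hlt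
    · rw [← coeff_interpolate_eq_dividedDiff hvs, card_insert_of_notMem hi, Nat.add_sub_cancel,
        ← natDegree_nodal (v := v), coeff_natDegree, nodal_monic.leadingCoeff]
      ring
    · have hins : (interpolate (insert i s) v r).coeff m = 0 := by
        refine coeff_eq_zero_of_degree_lt ((degree_interpolate_lt r hvs).trans_le ?_)
        rw [card_insert_of_notMem hi]; exact_mod_cast hlt
      rw [hins, coeff_eq_zero_of_natDegree_lt (by rwa [natDegree_nodal])]
      ring
  · rw [eval_sub, eval_add, eval_mul, eval_nodal_at_node hj, eval_interpolate_at_node r hvs' hj,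
      eval_interpolate_at_node r hvs (mem_insert_of_mem hj)]
    ring

theorem interpolate_Icc_eq_sum_dividedDiff_mul_nodal {v : ℕ → F} (r : ℕ → F) {m : ℕ}
    (hv : Set.InjOn v (Icc 1 m)) :
    interpolate (Icc 1 m) v r =
      ∑ l ∈ Icc 1 m, C (dividedDiff (Icc 1 l) v r) * nodal (Icc 1 (l - 1)) v := by
  induction m with
  | zero => simp
  | succ m ih =>
    have hIcc : insert (m + 1) (Icc 1 m) = Icc 1 (m + 1) :=
      insert_Icc_right_eq_Icc_add_one (by omega)
    rw [sum_Icc_succ_top (by omega), Nat.add_sub_cancel, ← hIcc, interpolate_insert (by simp)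
      (hIcc ▸ hv), ih (hv.mono (by rw [← hIcc]; simp)), hIcc]

theorem sum_prod_sub_mul_dividedDiff_Icc {v : ℕ → F} (r : ℕ → F) {m : ℕ} (hm : 1 ≤ m)
    (hv : Set.InjOn v (Icc 1 m)) :
    ∑ l ∈ Icc 1 m, (∏ t ∈ Icc 1 (l - 1), (v m - v t)) * dividedDiff (Icc 1 l) v r = r m := by
  have hnewton := congrArg (eval (v m)) (interpolate_Icc_eq_sum_dividedDiff_mul_nodal r hv)
  rw [eval_interpolate_at_node r hv (by simp [hm]), eval_finsetSum] at hnewton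
  simp only [eval_mul, eval_C, eval_nodal] at hnewton
  rw [hnewton]
  exact sum_congr rfl fun _ _ => mul_comm _ _

end Lagrange

noncomputable def expRemainderTerm (x : ℝ) (n : ℕ) : ℝ :=
  if 2 ≤ n then x ^ (n - 2) / (n.factorial : ℝ) else 0

theorem summable_expRemainderTerm (x : ℝ) : Summable (expRemainderTerm x) := by
  rw [← summable_nat_add_iff 2]
  refine (Real.summable_pow_div_factorial |x|).of_norm_bounded fun n => ?_
  have hfac : (n.factorial : ℝ) ≤ (n + 2).factorial := by
    exact_mod_cast Nat.factorial_le (by omega)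
  rw [expRemainderTerm, if_pos (by omega), Nat.add_sub_cancel, norm_div, norm_pow,
    Real.norm_natCast, Real.norm_eq_abs]
  gcongr

theorem gammaCoef_succ (μ : ℕ → ℝ) (l n : ℕ) :
    gammaCoef μ (l + 1) n = Lagrange.dividedDiff (Icc 1 l) μ (fun j => μ j ^ (n - 2)) :=
  rfl

theorem OmegaCoef_succ_eq_tsum_dividedDiff (μ : ℕ → ℝ) {l : ℕ} (hl : 1 ≤ l)
    (hμ : Set.InjOn μ (Icc 1 l)) :
    OmegaCoef μ (l + 1) =
      ∑' n, Lagrange.dividedDiff (Icc 1 l) μ (fun j => expRemainderTerm (μ j) n) := by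
  refine tsum_congr fun n => ?_
  by_cases h2 : 2 ≤ n
  · simp only [expRemainderTerm, if_pos h2, Lagrange.dividedDiff_div_const, ← gammaCoef_succ]
    split_ifs with hn
    · rfl
    · rw [gammaCoef_succ, Lagrange.dividedDiff_pow_eq_zero hμ (by rw [Nat.card_Icc]; omega),
        zero_div]
  · simp [expRemainderTerm, h2, Lagrange.dividedDiff, show ¬ l + 1 ≤ n by omega]

theorem coherent_state_expansion_general (k s : ℕ) (hs1 : 1 ≤ s) (hsk : s ≤ k)
    (μ : ℕ → ℝ)
    (hmono : ∀ i j, 1 ≤ i → i < j → j ≤ k → μ i < μ j) :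
    (∑' n : ℕ, if 2 ≤ n then μ s ^ (n - 2) / (n.factorial : ℝ) else 0) =
      ∑ l ∈ Finset.Icc 1 s,
        (∏ t ∈ Finset.Icc 1 (l - 1), (μ s - μ t)) * OmegaCoef μ (l + 1) := by
  have hinj : Set.InjOn μ (Icc 1 s) := StrictMonoOn.injOn fun a ha b hb hab => by
    simp only [coe_Icc, Set.mem_Icc] at ha hb
    exact hmono a b ha.1 hab (hb.2.trans hsk)
  have hsum (l : ℕ) : Summable fun n =>
      Lagrange.dividedDiff (Icc 1 l) μ (fun j => expRemainderTerm (μ j) n) :=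
    summable_sum fun j _ => (summable_expRemainderTerm (μ j)).div_const _
  calc (∑' n : ℕ, expRemainderTerm (μ s) n)
      = ∑' n, ∑ l ∈ Icc 1 s, (∏ t ∈ Icc 1 (l - 1), (μ s - μ t)) *
          Lagrange.dividedDiff (Icc 1 l) μ (fun j => expRemainderTerm (μ j) n) :=
        tsum_congr fun n =>
          (Lagrange.sum_prod_sub_mul_dividedDiff_Icc (fun j => expRemainderTerm (μ j) n) hs1
            hinj).symm
    _ = ∑ l ∈ Icc 1 s, (∏ t ∈ Icc 1 (l - 1), (μ s - μ t)) * OmegaCoef μ (l + 1) := by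
        rw [Summable.tsum_finsetSum fun l _ => (hsum l).mul_left _]
        refine sum_congr rfl fun l hl => ?_
        obtain ⟨hl1, hls⟩ := mem_Icc.mp hl
        have hinj_l : Set.InjOn μ (Icc 1 l) :=
          hinj.mono (coe_subset.mpr (Icc_subset_Icc_right hls))
        rw [OmegaCoef_succ_eq_tsum_dividedDiff μ hl1 hinj_l, tsum_mul_left]

/-- The convex expansion of the phase-randomized coherent state: for
`0 < μ_1 < … < μ_k` and `1 ≤ s ≤ k`,
`Σ_{n=2}^∞ μ_s^{n-2}/n! = Σ_{l=1}^{s} ∏_{t=1}^{l-1}(μ_s - μ_t) · Ω_{l+1}`. -/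
theorem coherent_state_expansion (k s : ℕ) (hs1 : 1 ≤ s) (hsk : s ≤ k)
    (μ : ℕ → ℝ) (hpos : ∀ i, 1 ≤ i → i ≤ k → 0 < μ i)
    (hmono : ∀ i j, 1 ≤ i → i < j → j ≤ k → μ i < μ j) :
    (∑' n : ℕ, if 2 ≤ n then μ s ^ (n - 2) / (n.factorial : ℝ) else 0) =
      ∑ l ∈ Finset.Icc 1 s,
        (∏ t ∈ Finset.Icc 1 (l - 1), (μ s - μ t)) * OmegaCoef μ (l + 1) :=
  coherent_state_expansion_general k s hs1 hsk μ hmono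
end

section
/- Fix constants p_0, p_D with 0 ≤ p_D ≤ p_0 < 1, α ∈ (0,1], s ∈ [0, 1/2], and suppose the counting rate and error rate functions are p(μ) = 1 - e^{-αμ} + p_0 and s(μ) = (s(1-e^{-αμ}) + p_0/2)/p(μ). Then the forward-case asymptotic key generation rate I_→(μ) := (1/2)[μ e^{-μ}(α + p_0 - p_D)(1 - h̄((sα + (p_0-p_D)/2)/(α + p_0 - p_D))) + e^{-μ} p_0 - p(μ) η(s(μ))] with η = h̄ satisfies dI_→/dμ ≤ 0 at μ = 1; hence the maximizing intensity satisfies argmax_μ I_→(μ) ≤ 1. -/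
noncomputable def hbar (x : ℝ) : ℝ :=
  if x ≤ 1 / 2 then -x * Real.logb 2 x - (1 - x) * Real.logb 2 (1 - x) else 1

lemma hbar_le_one (x : ℝ) : hbar x ≤ 1 := by
  unfold hbar
  split_ifs with h
  · have hb := Real.binEntropy_le_log_two (p := x)
    rw [Real.binEntropy] at hb
    have hlog2 : 0 < Real.log 2 := Real.log_pos one_lt_two
    have heq : -x * Real.logb 2 x - (1 - x) * Real.logb 2 (1 - x)
        = (x * Real.log x⁻¹ + (1 - x) * Real.log (1 - x)⁻¹) / Real.log 2 := by
      rw [Real.log_inv, Real.log_inv, Real.logb, Real.logb]; ring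
    rw [heq, div_le_one hlog2]
    exact hb
  · exact le_refl 1

lemma mul_log_div (u P : ℝ) (hu : 0 ≤ u) (hP : 0 < P) :
    u * Real.log (u / P) = u * Real.log u - u * Real.log P := by
  rcases eq_or_lt_of_le hu with h | h
  · simp [← h]
  · rw [Real.log_div h.ne' hP.ne']; ring

lemma hbar_identity (p0 s : ℝ) (hp0 : 0 ≤ p0) (hs0 : 0 ≤ s) (hs : s ≤ 1 / 2)
    {X : ℝ} (hX : 0 < X) :
    (X + p0) * hbar ((s * X + p0 / 2) / (X + p0)) =
      ((X + p0) * Real.log (X + p0) - (s * X + p0 / 2) * Real.log (s * X + p0 / 2)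
        - ((1 - s) * X + p0 / 2) * Real.log ((1 - s) * X + p0 / 2)) / Real.log 2 := by
  have hP : 0 < X + p0 := by linarith
  have hu : 0 ≤ s * X + p0 / 2 := by nlinarith
  have hv : (0:ℝ) < (1 - s) * X + p0 / 2 := by nlinarith
  have harg : (s * X + p0 / 2) / (X + p0) ≤ 1 / 2 := by
    rw [div_le_iff₀ hP]; nlinarith
  have h1 : 1 - (s * X + p0 / 2) / (X + p0) = ((1 - s) * X + p0 / 2) / (X + p0) := by
    field_simp; ring
  unfold hbar
  rw [if_pos harg, h1]
  rw [Real.logb, Real.logb]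
  rcases eq_or_lt_of_le hu with h0 | h0
  · have hs' : s = 0 := by nlinarith
    have hp' : p0 = 0 := by nlinarith
    subst hs' hp'
    simp [hX.ne', Real.log_zero, div_self hX.ne']
  · rw [Real.log_div h0.ne' hP.ne', Real.log_div hv.ne' hP.ne']
    have hL2 : Real.log 2 ≠ 0 := (Real.log_pos one_lt_two).ne'
    field_simp
    ring

lemma G_mono (p0 s : ℝ) (hp0 : 0 ≤ p0) (hs0 : 0 ≤ s) (hs : s ≤ 1 / 2) :
    MonotoneOn (fun X : ℝ =>
      (X + p0) * Real.log (X + p0) - (s * X + p0 / 2) * Real.log (s * X + p0 / 2)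
        - ((1 - s) * X + p0 / 2) * Real.log ((1 - s) * X + p0 / 2)) (Set.Ioi (0:ℝ)) := by
  by_cases hz : s = 0 ∧ p0 = 0
  · obtain ⟨h1, h2⟩ := hz
    intro x hx y hy hxy
    simp [h1, h2]
  · have hpos : ∀ x : ℝ, 0 < x → 0 < s * x + p0 / 2 := by
      intro x hx
      rcases lt_or_eq_of_le hs0 with h | h
      · nlinarith
      · rcases lt_or_eq_of_le hp0 with h' | h'
        · nlinarith
        · exact absurd ⟨h.symm, h'.symm⟩ hz
    have key : ∀ x : ℝ, 0 < x → HasDerivAt (fun X : ℝ =>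
        (X + p0) * Real.log (X + p0) - (s * X + p0 / 2) * Real.log (s * X + p0 / 2)
          - ((1 - s) * X + p0 / 2) * Real.log ((1 - s) * X + p0 / 2))
        ((Real.log (x + p0) + 1) - (Real.log (s * x + p0 / 2) + 1) * s
          - (Real.log ((1 - s) * x + p0 / 2) + 1) * (1 - s)) x := by
      intro x hx
      have hP : 0 < x + p0 := by linarith
      have hu : 0 < s * x + p0 / 2 := hpos x hx
      have hv : (0:ℝ) < (1 - s) * x + p0 / 2 := by nlinarith
      have h1 : HasDerivAt (fun X : ℝ => (X + p0) * Real.log (X + p0))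
          ((Real.log (x + p0) + 1) * 1) x := by
        have := (Real.hasDerivAt_mul_log hP.ne').comp x ((hasDerivAt_id x).add_const p0)
        exact this
      have h2 : HasDerivAt (fun X : ℝ => (s * X + p0 / 2) * Real.log (s * X + p0 / 2))
          ((Real.log (s * x + p0 / 2) + 1) * s) x := by
        have hin : HasDerivAt (fun X : ℝ => s * X + p0 / 2) s x := by
          simpa using ((hasDerivAt_id x).const_mul s).add_const (p0 / 2)
        exact (Real.hasDerivAt_mul_log hu.ne').comp x hin
      have h3 : HasDerivAt (fun X : ℝ => ((1 - s) * X + p0 / 2) * Real.log ((1 - s) * X + p0 / 2))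
          ((Real.log ((1 - s) * x + p0 / 2) + 1) * (1 - s)) x := by
        have hin : HasDerivAt (fun X : ℝ => (1 - s) * X + p0 / 2) (1 - s) x := by
          simpa using ((hasDerivAt_id x).const_mul (1 - s)).add_const (p0 / 2)
        exact (Real.hasDerivAt_mul_log hv.ne').comp x hin
      have := (h1.sub h2).sub h3
      convert this using 1
      all_goals first | rfl | ring
    apply monotoneOn_of_deriv_nonneg (convex_Ioi 0)
    · intro x hx
      have hx0 : (0:ℝ) < x := hx
      exact ((key x hx0).differentiableAt).continuousAt.continuousWithinAt
    · intro x hx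
      rw [interior_Ioi] at hx
      have hx0 : (0:ℝ) < x := hx
      exact ((key x hx0).differentiableAt).differentiableWithinAt
    · intro x hx
      rw [interior_Ioi] at hx
      have hx0 : (0:ℝ) < x := hx
      rw [(key x hx0).deriv]
      have hP : 0 < x + p0 := by linarith
      have hu : 0 < s * x + p0 / 2 := hpos x hx0
      have hv : (0:ℝ) < (1 - s) * x + p0 / 2 := by nlinarith
      have l1 : Real.log (s * x + p0 / 2) ≤ Real.log (x + p0) :=
        Real.log_le_log hu (by nlinarith)
      have l2 : Real.log ((1 - s) * x + p0 / 2) ≤ Real.log (x + p0) :=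
        Real.log_le_log hv (by nlinarith)
      nlinarith [mul_le_mul_of_nonneg_right l1 hs0,
        mul_le_mul_of_nonneg_right l2 (by linarith : (0:ℝ) ≤ 1 - s)]
/-- For the channel model `p(μ) = 1 - e^{-αμ} + p_0`,
`s(μ) = (s(1-e^{-αμ}) + p_0/2)/p(μ)`, the forward-case AKG rate
`I_→(μ) = (1/2)[μ e^{-μ}(α+p_0-p_D)(1 - h̄((sα+(p_0-p_D)/2)/(α+p_0-p_D)))
          + e^{-μ} p_0 - p(μ) h̄(s(μ))]`
has nonpositive derivative at `μ = 1`; hence its maximizing intensity is at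
most `1`. -/
theorem forward_rate_argmax_le_one (p0 pD α s : ℝ)
    (hpD : 0 ≤ pD) (hpDp0 : pD ≤ p0) (hp0 : p0 < 1)
    (hα0 : 0 < α) (hα1 : α ≤ 1) (hs0 : 0 ≤ s) (hs : s ≤ 1 / 2) :
    let p : ℝ → ℝ := fun μ => 1 - Real.exp (-α * μ) + p0
    let serr : ℝ → ℝ := fun μ => (s * (1 - Real.exp (-α * μ)) + p0 / 2) / p μ
    let I : ℝ → ℝ := fun μ =>
      (1 / 2) *
        (μ * Real.exp (-μ) * (α + p0 - pD) *
            (1 - hbar ((s * α + (p0 - pD) / 2) / (α + p0 - pD))) +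
          Real.exp (-μ) * p0 - p μ * hbar (serr μ))
    deriv I 1 ≤ 0 ∧ ∀ μ : ℝ, 1 ≤ μ → I μ ≤ I 1 := by
  intro p serr I
  have hp00 : 0 ≤ p0 := le_trans hpD hpDp0
  have hC : 0 < α + p0 - pD := by linarith
  have hK : 0 ≤ (α + p0 - pD) *
      (1 - hbar ((s * α + (p0 - pD) / 2) / (α + p0 - pD))) :=
    mul_nonneg hC.le (by linarith [hbar_le_one ((s * α + (p0 - pD) / 2) / (α + p0 - pD))])
  have hman : ∀ μ : ℝ, 1 ≤ μ → I μ ≤ I 1 := by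
    intro μ hμ
    have hμ0 : (0:ℝ) < μ := by linarith
    have he1 : μ * Real.exp (-μ) ≤ 1 * Real.exp (-1) := by
      have h := Real.add_one_le_exp (μ - 1)
      calc μ * Real.exp (-μ) ≤ Real.exp (μ - 1) * Real.exp (-μ) :=
            mul_le_mul_of_nonneg_right (by linarith) (Real.exp_nonneg _)
        _ = 1 * Real.exp (-1) := by rw [one_mul, ← Real.exp_add]; congr 1; ring
    have he2 : Real.exp (-μ) ≤ Real.exp (-1) := Real.exp_le_exp.2 (by linarith)
    have hX1 : (0:ℝ) < 1 - Real.exp (-α * 1) := by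
      have : Real.exp (-α * 1) < 1 := Real.exp_lt_one_iff.2 (by nlinarith)
      linarith
    have hXμ : (0:ℝ) < 1 - Real.exp (-α * μ) := by
      have : Real.exp (-α * μ) < 1 := Real.exp_lt_one_iff.2 (by nlinarith)
      linarith
    have hXle : 1 - Real.exp (-α * 1) ≤ 1 - Real.exp (-α * μ) := by
      have : Real.exp (-α * μ) ≤ Real.exp (-α * 1) := Real.exp_le_exp.2 (by nlinarith)
      linarith
    have hmono := G_mono p0 s hp00 hs0 hs (Set.mem_Ioi.2 hX1) (Set.mem_Ioi.2 hXμ) hXle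
    simp only at hmono
    have hGdiv := (div_le_div_iff_of_pos_right (Real.log_pos one_lt_two)).2 hmono
    have hid1 := hbar_identity p0 s hp00 hs0 hs hX1
    have hidμ := hbar_identity p0 s hp00 hs0 hs hXμ
    have t1 : μ * Real.exp (-μ) * ((α + p0 - pD) *
          (1 - hbar ((s * α + (p0 - pD) / 2) / (α + p0 - pD)))) ≤
        1 * Real.exp (-1) * ((α + p0 - pD) *
          (1 - hbar ((s * α + (p0 - pD) / 2) / (α + p0 - pD)))) :=
      mul_le_mul_of_nonneg_right he1 hK
    have t2 : Real.exp (-μ) * p0 ≤ Real.exp (-1) * p0 :=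
      mul_le_mul_of_nonneg_right he2 hp00
    simp only [I, p, serr]
    rw [hidμ, hid1]
    nlinarith [t1, t2, hGdiv]
  refine ⟨?_, hman⟩
  by_cases hd : DifferentiableAt ℝ I 1
  · have hD := hd.hasDerivAt
    rw [hasDerivAt_iff_tendsto_slope] at hD
    have hsub : Set.Ioi (1:ℝ) ⊆ {(1:ℝ)}ᶜ := fun x hx => by
      simp only [Set.mem_compl_iff, Set.mem_singleton_iff]
      exact ne_of_gt hx
    have hD' : Filter.Tendsto (slope I 1) (nhdsWithin 1 (Set.Ioi 1)) (nhds (deriv I 1)) :=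
      hD.mono_left (nhdsWithin_mono 1 hsub)
    refine le_of_tendsto hD' ?_
    filter_upwards [self_mem_nhdsWithin] with x hx
    have hIx := hman x (le_of_lt hx)
    rw [slope_def_field]
    exact div_nonpos_of_nonpos_of_nonneg (by linarith) (by linarith [Set.mem_Ioi.1 hx])
  · rw [deriv_zero_of_not_differentiableAt hd]
end
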